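/- Let G be a finite simple graph with adjacency matrix A and degree matrix D = diag(A𝟙), and let μ ∈ [0,1]. For a walk w: i = i_0, i_1, …, i_k = j define its number of backtracking instances b(w) = #{ℓ : 0 ≤ ℓ ≤ k−2, i_ℓ = i_{ℓ+2}}, and define Q_k ∈ ℝ^{n×n} entrywise by (Q_k)_{ij} = Σ_w (1−μ)^{b(w)}, the sum running over all walks w of length k from i to j. Then Q_0 = I, Q_1 = A, Q_2 = A² − μD, and for every k ≥ 2 the recurrence Q_{k+1} = A·Q_k + μ(μI − D)·Q_{k−1} holds. -/

import Mathlib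

/-!
Peel off the first step of a walk `i → m → ⋯ → j`: its backtracking count is the tail's, plus one
exactly when the tail's second vertex is `i`. Hence `Q (k+1) i j = (A * Q k) i j - μ R`, where `R`
is the total weight of the walks `m → i → ⋯ → j` of length `k` with `m` a neighbour of `i`.
Peeling these once more gives `R = dᵢ Q (k-1) i j - μ S`, where `S` is the total weight of the walks
`i → ⋯ → j` of length `k - 1` whose second vertex is a neighbour of `i`: all of them when `k ≥ 2`,
none when `k = 1`.
-/

open Matrix

/-- The number of backtracking instances of a walk `w`, i.e. the number of indices
`ℓ` with `0 ≤ ℓ ≤ length − 2` such that the `ℓ`-th and `(ℓ+2)`-th vertices coincide. -/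
def btCount {n : ℕ} {G : SimpleGraph (Fin n)} {i j : Fin n} (w : G.Walk i j) : ℕ :=
  ((Finset.range (w.length - 1)).filter (fun ℓ => w.getVert ℓ = w.getVert (ℓ + 2))).card

/-- The backtrack-downweighted walk count: the sum over all walks `w` of length `k`
from `i` to `j` of the weight `(1 − μ)^{b(w)}`, where `b(w)` is the number of
backtracking instances of `w`. -/
def btdwCount {n : ℕ} (G : SimpleGraph (Fin n)) [DecidableRel G.Adj]
    (μ : ℝ) (k : ℕ) (i j : Fin n) : ℝ :=
  ∑ w ∈ G.finsetWalkLength k i j, (1 - μ) ^ btCount w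

namespace SimpleGraph

open Finset

theorem sum_finsetWalkLength_succ {V : Type*} {G : SimpleGraph V} [DecidableEq V]
    [G.LocallyFinite] {M : Type*} [AddCommMonoid M] (k : ℕ) (u v : V) (f : G.Walk u v → M) :
    ∑ p ∈ G.finsetWalkLength (k + 1) u v, f p =
      ∑ w : G.neighborSet u, ∑ q ∈ G.finsetWalkLength k w v, f (q.cons w.2) := by
  rw [finsetWalkLength, sum_biUnion]
  · simp only [sum_map]
    rfl
  · rintro ⟨x, hx⟩ - ⟨y, hy⟩ - hxy
    refine Finset.disjoint_left.mpr ?_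
    simp only [mem_map]
    rintro _ ⟨p, -, rfl⟩ ⟨q, -, hq⟩
    cases hq
    exact hxy rfl

end SimpleGraph

open SimpleGraph Finset

variable {n : ℕ} {G : SimpleGraph (Fin n)}

theorem btCount_cons {i m j : Fin n} (h : G.Adj i m) (u : G.Walk m j) :
    btCount (u.cons h) = btCount u + if u.snd = i then 1 else 0 := by
  rcases Nat.eq_zero_or_pos u.length with hu | hu
  · have hmj := Walk.eq_of_length_eq_zero hu
    have hsnd : u.snd = j := u.getVert_of_length_le (by omega)
    simp [btCount, hu, hsnd, ← hmj, h.ne']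
  · have hlen : (u.cons h).length - 1 = u.length - 1 + 1 := by simp; omega
    rw [btCount, btCount, card_filter, card_filter, hlen, sum_range_succ']
    simp only [Walk.getVert_cons_succ, Walk.getVert_zero, Walk.snd, eq_comm (a := i)]
    rfl

variable [DecidableRel G.Adj] (μ : ℝ)

variable (G) in
def btdwCountSnd (k : ℕ) (i p j : Fin n) : ℝ :=
  ∑ w ∈ G.finsetWalkLength k i j with w.snd = p, (1 - μ) ^ btCount w

theorem sum_pow_btCount_cons {i m : Fin n} (h : G.Adj i m) (k : ℕ) (j : Fin n) :
    ∑ u ∈ G.finsetWalkLength k m j, (1 - μ) ^ btCount (u.cons h) =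
      btdwCount G μ k m j - μ * btdwCountSnd G μ k m i j := by
  rw [btdwCount, btdwCountSnd, sum_filter, mul_sum, ← sum_sub_distrib]
  refine sum_congr rfl fun u _ => ?_
  rw [btCount_cons, pow_add]
  split_ifs <;> ring

theorem btdwCount_succ (k : ℕ) (i j : Fin n) :
    btdwCount G μ (k + 1) i j =
      ∑ m ∈ G.neighborFinset i, (btdwCount G μ k m j - μ * btdwCountSnd G μ k m i j) := by
  rw [btdwCount, sum_finsetWalkLength_succ, sum_subtype _ (fun m => mem_neighborFinset G i m)]
  exact Fintype.sum_congr _ _ fun m => sum_pow_btCount_cons μ m.2 k j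

theorem btdwCountSnd_succ {m i : Fin n} (h : G.Adj m i) (k : ℕ) (j : Fin n) :
    btdwCountSnd G μ (k + 1) m i j = btdwCount G μ k i j - μ * btdwCountSnd G μ k i m j := by
  rw [btdwCountSnd, sum_filter, sum_finsetWalkLength_succ, Fintype.sum_eq_single ⟨i, h⟩]
  · rw [← sum_pow_btCount_cons μ h k j]
    exact sum_congr rfl fun q _ => if_pos (Walk.snd_cons q h)
  · rintro ⟨p, hp⟩ hne
    exact sum_eq_zero fun q _ =>
      if_neg fun hpi => hne (Subtype.ext ((Walk.snd_cons q hp).symm.trans hpi))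

theorem btdwCountSnd_zero {i p : Fin n} (hpi : p ≠ i) (j : Fin n) :
    btdwCountSnd G μ 0 i p j = 0 := by
  refine sum_eq_zero fun w hw => ?_
  obtain ⟨hlen, rfl⟩ := mem_filter.mp hw
  have hlen : w.length = 0 := mem_finsetWalkLength_iff.mp hlen
  have hsnd : w.snd = j := w.getVert_of_length_le (by omega)
  exact absurd (hsnd.trans (Walk.eq_of_length_eq_zero hlen).symm) hpi

theorem sum_btdwCountSnd {k : ℕ} (hk : k ≠ 0) (i j : Fin n) :
    ∑ p ∈ G.neighborFinset i, btdwCountSnd G μ k i p j = btdwCount G μ k i j := by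
  refine sum_fiberwise_of_maps_to (fun w hw => ?_) _
  rw [mem_finsetWalkLength_iff] at hw
  rw [mem_neighborFinset]
  exact Walk.adj_snd (Walk.not_nil_iff_lt_length.mpr (by omega))

theorem btdwCount_add_two (k : ℕ) (i j : Fin n) :
    btdwCount G μ (k + 2) i j =
      ∑ p ∈ G.neighborFinset i, btdwCount G μ (k + 1) p j - μ * G.degree i * btdwCount G μ k i j
        + μ ^ 2 * ∑ p ∈ G.neighborFinset i, btdwCountSnd G μ k i p j := by
  rw [btdwCount_succ, sum_congr rfl fun p hp =>
    by rw [btdwCountSnd_succ μ ((mem_neighborFinset G i p).mp hp).symm]]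
  simp only [sum_sub_distrib, ← mul_sum, sum_const, card_neighborFinset_eq_degree, nsmul_eq_mul]
  ring

variable (G) in
def btdwMatrix (k : ℕ) : Matrix (Fin n) (Fin n) ℝ :=
  of (btdwCount G μ k)

@[simp]
theorem btdwMatrix_apply (k : ℕ) (i j : Fin n) : btdwMatrix G μ k i j = btdwCount G μ k i j :=
  rfl

theorem btdwMatrix_zero : btdwMatrix G μ 0 = 1 := by
  ext i j
  obtain rfl | hij := eq_or_ne i j <;> simp [btdwCount, finsetWalkLength, btCount, one_apply, *]

theorem btdwMatrix_one : btdwMatrix G μ 1 = G.adjMatrix ℝ := by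
  ext i j
  have hsnd : ∀ p ∈ G.neighborFinset i, btdwCountSnd G μ 0 p i j = 0 := fun p hp =>
    btdwCountSnd_zero μ ((mem_neighborFinset G i p).mp hp).ne j
  rw [btdwMatrix_apply, btdwCount_succ, sum_congr rfl fun p hp => by rw [hsnd p hp],
    ← mul_one (G.adjMatrix ℝ), adjMatrix_mul_apply, ← btdwMatrix_zero (G := G) μ]
  simp

theorem btdwMatrix_two : btdwMatrix G μ 2 = G.adjMatrix ℝ ^ 2 - μ • G.degMatrix ℝ := by
  ext i j
  have hsnd : ∀ p ∈ G.neighborFinset i, btdwCountSnd G μ 0 i p j = 0 := fun p hp =>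
    btdwCountSnd_zero μ ((mem_neighborFinset G i p).mp hp).ne' j
  rw [btdwMatrix_apply, btdwCount_add_two, sum_eq_zero hsnd, sq (G.adjMatrix ℝ), Matrix.sub_apply,
    adjMatrix_mul_apply]
  simp [← btdwMatrix_apply, btdwMatrix_one, btdwMatrix_zero, degMatrix, diagonal_apply, one_apply]

theorem btdwMatrix_add_three (k : ℕ) :
    btdwMatrix G μ (k + 3) = G.adjMatrix ℝ * btdwMatrix G μ (k + 2)
      + μ • (μ • (1 : Matrix (Fin n) (Fin n) ℝ) - G.degMatrix ℝ) * btdwMatrix G μ (k + 1) := by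
  ext i j
  rw [btdwMatrix_apply, btdwCount_add_two, sum_btdwCountSnd μ k.succ_ne_zero, Matrix.add_apply,
    adjMatrix_mul_apply]
  simp only [btdwMatrix_apply, degMatrix, Algebra.smul_mul_assoc, sub_mul, one_mul,
    Matrix.smul_apply, Matrix.sub_apply, smul_eq_mul, diagonal_mul]
  ring

theorem btdw_count_recurrence_general
    {n : ℕ} (G : SimpleGraph (Fin n)) [DecidableRel G.Adj]
    (A D : Matrix (Fin n) (Fin n) ℝ)
    (hA : A = G.adjMatrix ℝ)
    (hD : D = Matrix.diagonal (A *ᵥ fun _ => (1 : ℝ)))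
    (μ : ℝ)
    (Q : ℕ → Matrix (Fin n) (Fin n) ℝ)
    (hQ : ∀ k i j, Q k i j = btdwCount G μ k i j) :
    Q 0 = 1 ∧ Q 1 = A ∧ Q 2 = A ^ 2 - μ • D ∧
    ∀ k, 2 ≤ k →
      Q (k + 1) = A * Q k + (μ • (μ • (1 : Matrix (Fin n) (Fin n) ℝ) - D)) * Q (k - 1) := by
  obtain rfl : Q = btdwMatrix G μ := funext fun k => Matrix.ext (hQ k)
  obtain rfl : D = G.degMatrix ℝ := by
    rw [hD, hA, degMatrix]
    congr 1
    ext i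
    simp
  subst hA
  refine ⟨btdwMatrix_zero μ, btdwMatrix_one μ, btdwMatrix_two μ, fun k hk => ?_⟩
  obtain ⟨k, rfl⟩ := Nat.exists_eq_add_of_le' hk
  exact btdwMatrix_add_three μ k

/-- Let `A = G.adjMatrix ℝ`, `D = diag(A𝟙)`, `μ ∈ [0,1]`, and let
`(Q k) i j = Σ_w (1−μ)^{b(w)}` over walks `w` of length `k` from `i` to `j`. Then
`Q 0 = I`, `Q 1 = A`, `Q 2 = A² − μD`, and for every `k ≥ 2`,
`Q (k+1) = A·Q k + μ(μI − D)·Q (k−1)`. -/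
theorem btdw_count_recurrence
    {n : ℕ} (G : SimpleGraph (Fin n)) [DecidableRel G.Adj]
    (A D : Matrix (Fin n) (Fin n) ℝ)
    (hA : A = G.adjMatrix ℝ)
    (hD : D = Matrix.diagonal (A *ᵥ fun _ => (1 : ℝ)))
    (μ : ℝ) (hμ : μ ∈ Set.Icc (0 : ℝ) 1)
    (Q : ℕ → Matrix (Fin n) (Fin n) ℝ)
    (hQ : ∀ k i j, Q k i j = btdwCount G μ k i j) :
    Q 0 = 1 ∧ Q 1 = A ∧ Q 2 = A ^ 2 - μ • D ∧
    ∀ k, 2 ≤ k →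
      Q (k + 1) = A * Q k + (μ • (μ • (1 : Matrix (Fin n) (Fin n) ℝ) - D)) * Q (k - 1) :=
  btdw_count_recurrence_general G A D hA hD μ Q hQ
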